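/- Let Π be a DatalogMTL program with non-recursive fragment Π_nr and recursive fragment Π_rec, let D be a dataset, and let E be a dataset such that 𝔍_D ⊆ 𝔍_E ⊆ can(Π,D) and can(Π_nr, D) ⊆ 𝔍_E. Then can(Π_rec, E) = can(Π, E) = can(Π, D); in particular, once all non-recursive predicates are fully materialised, all non-recursive rules can be discarded without affecting the canonical interpretation. -/
import Mathlib


namespace DatalogMTL

/-- An interval: a nonempty convex subset of the rational timeline. -/
structure Intvl where
  carrier : Set ℚ
  nonempty : carrier.Nonempty
  convex : ∀ ⦃a b c : ℚ⦄, a ∈ carrier → c ∈ carrier → a ≤ b → b ≤ c → b ∈ carrier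

/-- An interval containing only non-negative rationals. -/
def Intvl.Nonneg (ρ : Intvl) : Prop := ∀ t ∈ ρ.carrier, (0 : ℚ) ≤ t

/-- Intervals indexing metric operators: only non-negative rationals. -/
abbrev NNIntvl := {ρ : Intvl // ρ.Nonneg}

/-- Terms: variables or constants (both named by naturals). -/
inductive Term where
  | var (v : ℕ)
  | const (c : ℕ)

/-- A (possibly non-ground) relational atom. -/
structure Atom where
  pred : ℕ
  args : List Term

/-- A ground relational atom. -/
structure GAtom where
  pred : ℕ
  args : List ℕ

/-- Applying a substitution (assignment of constants to variables) to a term. -/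
def Term.subst (σ : ℕ → ℕ) : Term → ℕ
  | Term.var v => σ v
  | Term.const c => c

/-- Applying a substitution to a relational atom, producing a ground atom. -/
def Atom.subst (σ : ℕ → ℕ) (A : Atom) : GAtom := ⟨A.pred, A.args.map (Term.subst σ)⟩

/-- Metric atoms over atoms of type `α`. -/
inductive MA (α : Type) where
  | top : MA α
  | bot : MA α
  | atom (A : α) : MA α
  | diaMinus (ρ : NNIntvl) (M : MA α) : MA α
  | diaPlus (ρ : NNIntvl) (M : MA α) : MA α
  | boxMinus (ρ : NNIntvl) (M : MA α) : MA α
  | boxPlus (ρ : NNIntvl) (M : MA α) : MA α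
  | since (ρ : NNIntvl) (M₁ M₂ : MA α) : MA α
  | untl (ρ : NNIntvl) (M₁ M₂ : MA α) : MA α

def MA.map {α β : Type} (g : α → β) : MA α → MA β
  | .top => .top
  | .bot => .bot
  | .atom A => .atom (g A)
  | .diaMinus ρ M => .diaMinus ρ (M.map g)
  | .diaPlus ρ M => .diaPlus ρ (M.map g)
  | .boxMinus ρ M => .boxMinus ρ (M.map g)
  | .boxPlus ρ M => .boxPlus ρ (M.map g)
  | .since ρ M₁ M₂ => .since ρ (M₁.map g) (M₂.map g)
  | .untl ρ M₁ M₂ => .untl ρ (M₁.map g) (M₂.map g)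

/-- Grounding a metric atom by a substitution. -/
def MA.subst (M : MA Atom) (σ : ℕ → ℕ) : MA GAtom := M.map (Atom.subst σ)

/-- An interpretation: for each ground relational atom and rational time point,
whether the atom holds there. -/
def Interp : Type := GAtom → ℚ → Prop

/-- Containment of interpretations. -/
def leI (I J : Interp) : Prop := ∀ A t, I A t → J A t

/-- Satisfaction of ground metric atoms at a time point. -/
def sat (I : Interp) : ℚ → MA GAtom → Prop
  | _, .top => True
  | _, .bot => False
  | t, .atom A => I A t
  | t, .diaMinus ρ M => ∃ t', (t - t') ∈ ρ.1.carrier ∧ sat I t' M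
  | t, .diaPlus ρ M => ∃ t', (t' - t) ∈ ρ.1.carrier ∧ sat I t' M
  | t, .boxMinus ρ M => ∀ t', (t - t') ∈ ρ.1.carrier → sat I t' M
  | t, .boxPlus ρ M => ∀ t', (t' - t) ∈ ρ.1.carrier → sat I t' M
  | t, .since ρ M₁ M₂ =>
      ∃ t', (t - t') ∈ ρ.1.carrier ∧ sat I t' M₂ ∧ ∀ t'', t' < t'' → t'' < t → sat I t'' M₁
  | t, .untl ρ M₁ M₂ =>
      ∃ t', (t' - t) ∈ ρ.1.carrier ∧ sat I t' M₂ ∧ ∀ t'', t < t'' → t'' < t' → sat I t'' M₁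

/-- Satisfaction of a ground metric atom throughout a set of time points. -/
def satSet (I : Interp) (M : MA GAtom) (s : Set ℚ) : Prop := ∀ t ∈ s, sat I t M

/-- Satisfaction of a ground metric atom throughout an interval. -/
def satIvl (I : Interp) (M : MA GAtom) (ρ : Intvl) : Prop := satSet I M ρ.carrier

/-- A fact `M@ρ`. -/
structure Fact where
  atom : GAtom
  ivl : Intvl

/-- The least model of a set of facts. -/
def interpOf (F : Set Fact) : Interp := fun A t => ∃ f ∈ F, f.atom = A ∧ t ∈ f.ivl.carrier

/-- A dataset: a finite set of facts. -/
structure Dataset where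
  facts : Set Fact
  finite : facts.Finite

/-- The least model `𝔍_D` of a dataset `D`. -/
def Dataset.interp (D : Dataset) : Interp := interpOf D.facts

/-- An interpretation satisfies a fact if the atom holds throughout the interval. -/
def satFact (I : Interp) (f : Fact) : Prop := satIvl I (MA.atom f.atom) f.ivl

/-- The head grammar `M' ::= ⊤ | P(s) | ■⁻ρ M' | ■⁺ρ M'`. -/
inductive HeadOK {α : Type} : MA α → Prop where
  | top : HeadOK MA.top
  | atom (A : α) : HeadOK (MA.atom A)
  | boxMinus (ρ : NNIntvl) {M : MA α} : HeadOK M → HeadOK (MA.boxMinus ρ M)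
  | boxPlus (ρ : NNIntvl) {M : MA α} : HeadOK M → HeadOK (MA.boxPlus ρ M)

/-- Variables of a relational atom. -/
def Atom.vars (A : Atom) : Set ℕ := {v | Term.var v ∈ A.args}

/-- Variables of a metric atom. -/
def MA.vars : MA Atom → Set ℕ
  | .top => ∅
  | .bot => ∅
  | .atom A => A.vars
  | .diaMinus _ M => M.vars
  | .diaPlus _ M => M.vars
  | .boxMinus _ M => M.vars
  | .boxPlus _ M => M.vars
  | .since _ M₁ M₂ => M₁.vars ∪ M₂.vars
  | .untl _ M₁ M₂ => M₁.vars ∪ M₂.vars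

/-- Variables of a metric atom occurring outside left operands of `S` and `U`. -/
def MA.safeVars : MA Atom → Set ℕ
  | .top => ∅
  | .bot => ∅
  | .atom A => A.vars
  | .diaMinus _ M => M.safeVars
  | .diaPlus _ M => M.safeVars
  | .boxMinus _ M => M.safeVars
  | .boxPlus _ M => M.safeVars
  | .since _ _ M₂ => M₂.safeVars
  | .untl _ _ M₂ => M₂.safeVars

/-- A (safe) rule `M' ← M₁ ∧ … ∧ Mₙ`, `n ≥ 1`, with head from the head grammar. -/
structure Rule where
  head : MA Atom
  body : List (MA Atom)
  body_ne : body ≠ []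
  head_ok : HeadOK head
  safe : head.vars ⊆ ⋃ M ∈ body, MA.safeVars M

/-- A program: a finite set of (safe) rules. -/
structure Program where
  rules : Set Rule
  finite : rules.Finite

/-- An interpretation satisfies a rule if it satisfies all its ground instances. -/
def modelsRule (I : Interp) (r : Rule) : Prop :=
  ∀ (σ : ℕ → ℕ) (t : ℚ), (∀ M ∈ r.body, sat I t (M.subst σ)) → sat I t (r.head.subst σ)

def modelsProgram (I : Interp) (P : Program) : Prop := ∀ r ∈ P.rules, modelsRule I r

def modelsDataset (I : Interp) (D : Dataset) : Prop := ∀ f ∈ D.facts, satFact I f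

/-- `gEntails M s A u` : every interpretation satisfying the ground metric atom `M`
throughout `s` satisfies the ground relational atom `A` throughout `u`. -/
def gEntails (M : MA GAtom) (s : Set ℚ) (A : GAtom) (u : Set ℚ) : Prop :=
  ∀ J : Interp, satSet J M s → ∀ t ∈ u, J A t

/-- The immediate consequence operator `T_Π`: the least interpretation containing `I`
and satisfying, for each ground rule instance whose body is satisfied by `I` at `t`,
the head of the instance at `t`. -/
def TP (P : Program) (I : Interp) : Interp := fun A t' =>
  I A t' ∨ ∃ r ∈ P.rules, ∃ (σ : ℕ → ℕ) (t : ℚ),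
    (∀ M ∈ r.body, sat I t (M.subst σ)) ∧ gEntails (r.head.subst σ) {t} A {t'}

/-- Finite powers of the immediate consequence operator. -/
def TPiter (P : Program) : ℕ → Interp → Interp
  | 0, I => I
  | k + 1, I => TP P (TPiter P k I)

/-- The canonical interpretation `can(Π,D) = T_Π^{ω₁}(𝔍_D)`, characterised as the least
prefixed point of the (monotone, inflationary) operator `T_Π` containing the given
interpretation (the transfinite iteration stabilises at `ω₁` on this least fixpoint). -/
def canon (P : Program) (I : Interp) : Interp := fun A t =>
  ∀ J : Interp, leI I J → leI (TP P J) J → J A t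

/-- Projection of an interpretation to a set of time points. -/
def proj (I : Interp) (s : Set ℚ) : Interp := fun A t => t ∈ s ∧ I A t

/-- Metric atoms mentioning only relational atoms and past operators `◆⁻, ■⁻, S`. -/
def MA.PastOnly {α : Type} : MA α → Prop
  | .atom _ => True
  | .diaMinus _ M => M.PastOnly
  | .boxMinus _ M => M.PastOnly
  | .since _ M₁ M₂ => M₁.PastOnly ∧ M₂.PastOnly
  | _ => False

/-- Metric atoms mentioning only relational atoms and future operators `◆⁺, ■⁺, U`. -/
def MA.FutureOnly {α : Type} : MA α → Prop
  | .atom _ => True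
  | .diaPlus _ M => M.FutureOnly
  | .boxPlus _ M => M.FutureOnly
  | .untl _ M₁ M₂ => M₁.FutureOnly ∧ M₂.FutureOnly
  | _ => False

def Rule.ForwardProp (r : Rule) : Prop :=
  (∀ M ∈ r.body, MA.PastOnly M) ∧ MA.FutureOnly r.head

def Rule.BackwardProp (r : Rule) : Prop :=
  (∀ M ∈ r.body, MA.FutureOnly M) ∧ MA.PastOnly r.head

def Program.ForwardProp (P : Program) : Prop := ∀ r ∈ P.rules, r.ForwardProp

def Program.BackwardProp (P : Program) : Prop := ∀ r ∈ P.rules, r.BackwardProp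

/-- Predicates mentioned in a metric atom. -/
def MA.apreds : MA Atom → Set ℕ
  | .top => ∅
  | .bot => ∅
  | .atom A => {A.pred}
  | .diaMinus _ M => M.apreds
  | .diaPlus _ M => M.apreds
  | .boxMinus _ M => M.apreds
  | .boxPlus _ M => M.apreds
  | .since _ M₁ M₂ => M₁.apreds ∪ M₂.apreds
  | .untl _ M₁ M₂ => M₁.apreds ∪ M₂.apreds

def Rule.headPreds (r : Rule) : Set ℕ := r.head.apreds

def Rule.bodyPreds (r : Rule) : Set ℕ := ⋃ M ∈ r.body, MA.apreds M

/-- Edge of the dependency graph: some rule mentions `Q` in its body and `R` in its head. -/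
def DepEdge (P : Program) (Q R : ℕ) : Prop :=
  ∃ r ∈ P.rules, Q ∈ r.bodyPreds ∧ R ∈ r.headPreds

/-- A predicate is recursive if the dependency graph has a path containing a cycle
and ending in it. -/
def Recursive (P : Program) (Q : ℕ) : Prop :=
  ∃ R : ℕ, Relation.TransGen (DepEdge P) R R ∧ Relation.ReflTransGen (DepEdge P) R Q

def Program.restrict (P : Program) (p : Rule → Prop) : Program :=
  ⟨{r | r ∈ P.rules ∧ p r}, P.finite.subset (fun _ hr => hr.1)⟩

/-- The non-recursive fragment: rules whose heads mention only non-recursive predicates. -/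
def Program.nrFrag (P : Program) : Program :=
  P.restrict (fun r => ∀ Q ∈ r.headPreds, ¬ Recursive P Q)

/-- The recursive fragment: the remaining rules. -/
def Program.recFrag (P : Program) : Program :=
  P.restrict (fun r => ¬ ∀ Q ∈ r.headPreds, ¬ Recursive P Q)

/-- Removing a single rule from a program. -/
def Program.erase (P : Program) (r : Rule) : Program := P.restrict (fun r' => r' ≠ r)

/-- `ρ` is a subset-maximal interval on which `I` satisfies `M`. -/
def MaximalSat (I : Interp) (M : MA GAtom) (ρ : Intvl) : Prop :=
  satIvl I M ρ ∧ ∀ ρ' : Intvl, ρ.carrier ⊆ ρ'.carrier → satIvl I M ρ' → ρ'.carrier = ρ.carrier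

/-- The single relational atom occurring in a head-shaped metric atom (if any). -/
def MA.headAtom {α : Type} : MA α → Option α
  | .atom A => some A
  | .boxMinus _ M => M.headAtom
  | .boxPlus _ M => M.headAtom
  | _ => none

/-- The set `r[F]` of facts derived by rule `r` from the facts `F` (Definition 1). -/
def Rule.derive (r : Rule) (F : Set Fact) : Set Fact :=
  { f | ∃ (σ : ℕ → ℕ) (ρs : Fin r.body.length → Intvl),
      (∀ i : Fin r.body.length, MaximalSat (interpOf F) ((r.body.get i).subst σ) (ρs i)) ∧
      (r.head.subst σ).headAtom = some f.atom ∧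
      gEntails (r.head.subst σ) (⋂ i, (ρs i).carrier) f.atom f.ivl.carrier ∧
      ∀ ρ' : Intvl, f.ivl.carrier ⊆ ρ'.carrier →
        gEntails (r.head.subst σ) (⋂ i, (ρs i).carrier) f.atom ρ'.carrier →
        ρ'.carrier = f.ivl.carrier }

/-- The set `Π[F]` of facts derived from `F` by one-step application of `Π`. -/
def Program.derive (P : Program) (F : Set Fact) : Set Fact := ⋃ r ∈ P.rules, Rule.derive r F

/-- The coalescing `F₁ ⋓ F₂`: all facts `M@ρ` such that the least model of `F₁ ∪ F₂`
satisfies `M@ρ` but no `M@ρ'` for an interval `ρ'` strictly containing `ρ`. -/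
def coalesce (F₁ F₂ : Set Fact) : Set Fact :=
  { f | satIvl (interpOf (F₁ ∪ F₂)) (MA.atom f.atom) f.ivl ∧
        ∀ ρ' : Intvl, f.ivl.carrier ⊂ ρ'.carrier →
          ¬ satIvl (interpOf (F₁ ∪ F₂)) (MA.atom f.atom) ρ' }

/-! ### Auxiliary lemmas -/

/-- Predicates mentioned in a ground metric atom. -/
def gpreds : MA GAtom → Set ℕ
  | .top => ∅
  | .bot => ∅
  | .atom A => {A.pred}
  | .diaMinus _ M => gpreds M
  | .diaPlus _ M => gpreds M
  | .boxMinus _ M => gpreds M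
  | .boxPlus _ M => gpreds M
  | .since _ M₁ M₂ => gpreds M₁ ∪ gpreds M₂
  | .untl _ M₁ M₂ => gpreds M₁ ∪ gpreds M₂

lemma gpreds_subst (M : MA Atom) (σ : ℕ → ℕ) : gpreds (M.subst σ) = M.apreds := by
  induction M <;> simp [MA.subst, MA.map, gpreds, MA.apreds, Atom.subst] at * <;> simp [*]

lemma sat_mono {I J : Interp} (h : leI I J) : ∀ (M : MA GAtom) (t : ℚ),
    sat I t M → sat J t M := by
  intro M
  induction M with
  | top => intro t _; trivial
  | bot => intro t hf; exact hf
  | atom A => intro t ht; exact h A t ht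
  | diaMinus ρ M ih => rintro t ⟨t', ht1, ht2⟩; exact ⟨t', ht1, ih t' ht2⟩
  | diaPlus ρ M ih => rintro t ⟨t', ht1, ht2⟩; exact ⟨t', ht1, ih t' ht2⟩
  | boxMinus ρ M ih => intro t hs t' ht'; exact ih t' (hs t' ht')
  | boxPlus ρ M ih => intro t hs t' ht'; exact ih t' (hs t' ht')
  | since ρ M₁ M₂ ih1 ih2 =>
      rintro t ⟨t', ht1, ht2, ht3⟩
      exact ⟨t', ht1, ih2 t' ht2, fun t'' ha hb => ih1 t'' (ht3 t'' ha hb)⟩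
  | untl ρ M₁ M₂ ih1 ih2 =>
      rintro t ⟨t', ht1, ht2, ht3⟩
      exact ⟨t', ht1, ih2 t' ht2, fun t'' ha hb => ih1 t'' (ht3 t'' ha hb)⟩

lemma sat_congr_mp {I J : Interp} : ∀ (M : MA GAtom),
    (∀ (B : GAtom) (s : ℚ), B.pred ∈ gpreds M → I B s → J B s) →
    ∀ t, sat I t M → sat J t M := by
  intro M
  induction M with
  | top => intro _ t _; trivial
  | bot => intro _ t hf; exact hf
  | atom A => intro h t ht; exact h A t rfl ht
  | diaMinus ρ M ih => rintro h t ⟨t', ht1, ht2⟩; exact ⟨t', ht1, ih h t' ht2⟩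
  | diaPlus ρ M ih => rintro h t ⟨t', ht1, ht2⟩; exact ⟨t', ht1, ih h t' ht2⟩
  | boxMinus ρ M ih => intro h t hs t' ht'; exact ih h t' (hs t' ht')
  | boxPlus ρ M ih => intro h t hs t' ht'; exact ih h t' (hs t' ht')
  | since ρ M₁ M₂ ih1 ih2 =>
      rintro h t ⟨t', ht1, ht2, ht3⟩
      exact ⟨t', ht1, ih2 (fun B s hB => h B s (Or.inr hB)) t' ht2,
        fun t'' ha hb => ih1 (fun B s hB => h B s (Or.inl hB)) t'' (ht3 t'' ha hb)⟩
  | untl ρ M₁ M₂ ih1 ih2 =>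
      rintro h t ⟨t', ht1, ht2, ht3⟩
      exact ⟨t', ht1, ih2 (fun B s hB => h B s (Or.inr hB)) t' ht2,
        fun t'' ha hb => ih1 (fun B s hB => h B s (Or.inl hB)) t'' (ht3 t'' ha hb)⟩

lemma headOK_map {α β : Type} (g : α → β) {M : MA α} (h : HeadOK M) :
    HeadOK (M.map g) := by
  induction h with
  | top => exact .top
  | atom A => exact .atom _
  | boxMinus ρ _ ih => exact .boxMinus ρ ih
  | boxPlus ρ _ ih => exact .boxPlus ρ ih

lemma sat_of_headOK {S : Set ℕ} : ∀ {M : MA GAtom}, HeadOK M → gpreds M ⊆ S →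
    ∀ t, sat (fun B _ => B.pred ∈ S) t M := by
  intro M h
  induction h with
  | top => intro _ t; trivial
  | atom A => intro hs t; exact hs rfl
  | boxMinus ρ _ ih => intro hs t t' _; exact ih hs t'
  | boxPlus ρ _ ih => intro hs t t' _; exact ih hs t'

lemma gEntails_pred {M : MA GAtom} (h : HeadOK M) {t t' : ℚ} {A : GAtom}
    (hg : gEntails M {t} A {t'}) : A.pred ∈ gpreds M :=
  hg (fun B _ => B.pred ∈ gpreds M)
    (fun s _ => sat_of_headOK h (fun _ hq => hq) s) t' rfl

lemma gpreds_subsingleton {M : MA GAtom} (h : HeadOK M) : (gpreds M).Subsingleton := by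
  induction h with
  | top => exact Set.subsingleton_empty
  | atom A => exact Set.subsingleton_singleton
  | boxMinus ρ _ ih => exact ih
  | boxPlus ρ _ ih => exact ih

lemma le_canon (P : Program) (I : Interp) : leI I (canon P I) :=
  fun A t h J hIJ _ => hIJ A t h

lemma canon_le (P : Program) {I J : Interp} (h1 : leI I J) (h2 : leI (TP P J) J) :
    leI (canon P I) J := fun A t hc => hc J h1 h2

lemma canon_mono (P : Program) {I I' : Interp} (h : leI I I') :
    leI (canon P I) (canon P I') :=
  fun A t hc J h1 h2 => hc J (fun B s hb => h1 B s (h B s hb)) h2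

lemma canon_prefixed (P : Program) (I : Interp) :
    leI (TP P (canon P I)) (canon P I) := by
  intro A t h J h1 h2
  rcases h with h | ⟨r, hr, σ, t₀, hbody, hent⟩
  · exact h J h1 h2
  · exact h2 A t (Or.inr ⟨r, hr, σ, t₀,
      fun M hM => sat_mono (canon_le P h1 h2) _ _ (hbody M hM), hent⟩)

lemma canon_rules_mono {P P' : Program} (h : P'.rules ⊆ P.rules) (I : Interp) :
    leI (canon P' I) (canon P I) := by
  intro A t hc J h1 h2
  refine hc J h1 (fun B s hb => h2 B s ?_)
  rcases hb with hb | ⟨r, hr, rest⟩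
  · exact Or.inl hb
  · exact Or.inr ⟨r, h hr, rest⟩

lemma recursive_of_edge {P : Program} {Q R : ℕ} (hQ : Recursive P Q)
    (e : DepEdge P Q R) : Recursive P R := by
  obtain ⟨S, hc, hp⟩ := hQ
  exact ⟨S, hc, hp.tail e⟩

lemma body_nonrec {P : Program} {r : Rule} (hr : r ∈ P.rules)
    (hnr : ∀ Q ∈ r.headPreds, ¬ Recursive P Q) {Q : ℕ} (hQ : Q ∈ r.bodyPreds)
    {R : ℕ} (hR : R ∈ r.headPreds) : ¬ Recursive P Q := by
  intro h
  exact hnr R hR (recursive_of_edge h ⟨r, hr, hQ, hR⟩)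

/-- Nonrecursive part of `can(Π, I)` is contained in `can(Π_nr, I)`. -/
lemma canon_nonrec_proj (P : Program) (I : Interp) {A : GAtom} {t : ℚ}
    (hc : canon P I A t) (hnr : ¬ Recursive P A.pred) : canon P.nrFrag I A t := by
  set J₁ : Interp := fun B s => canon P.nrFrag I B s ∨ Recursive P B.pred with hJ₁
  have hIJ : leI I J₁ := fun B s hb => Or.inl (le_canon _ _ B s hb)
  have hpre : leI (TP P J₁) J₁ := by
    intro B s hb
    rcases hb with hb | ⟨r, hr, σ, t₀, hbody, hent⟩
    · exact hb
    · have hok : HeadOK (r.head.subst σ) := headOK_map _ r.head_ok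
      have hB : B.pred ∈ gpreds (r.head.subst σ) := gEntails_pred hok hent
      have hB' : B.pred ∈ r.headPreds := by rwa [gpreds_subst] at hB
      by_cases hrec : Recursive P B.pred
      · exact Or.inr hrec
      · have hss := gpreds_subsingleton hok
        rw [gpreds_subst] at hss
        have hall : ∀ Q ∈ r.headPreds, ¬ Recursive P Q := by
          intro Q hQ
          rwa [hss hQ hB']
        have hrmem : r ∈ P.nrFrag.rules := ⟨hr, hall⟩
        have hbody' : ∀ M ∈ r.body, sat (canon P.nrFrag I) t₀ (M.subst σ) := by
          intro M hM
          refine sat_congr_mp _ (fun C u hC hCu => ?_) t₀ (hbody M hM)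
          rcases hCu with hCu | hCrec
          · exact hCu
          · exfalso
            rw [gpreds_subst] at hC
            have hCb : C.pred ∈ r.bodyPreds := Set.mem_biUnion hM hC
            exact body_nonrec hr hall hCb hB' hCrec
        refine Or.inl (canon_prefixed P.nrFrag I B s ?_)
        exact Or.inr ⟨r, hrmem, σ, t₀, hbody', hent⟩
  rcases hc J₁ hIJ hpre with h | h
  · exact h
  · exact absurd h hnr

/-- Nonrecursive part of `can(Π_rec, E)` is contained in `E`. -/
lemma canon_recFrag_nonrec (P : Program) (E : Interp) {A : GAtom} {t : ℚ}
    (hc : canon P.recFrag E A t) (hnr : ¬ Recursive P A.pred) : E A t := by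
  set J₀ : Interp := fun B s => E B s ∨ Recursive P B.pred with hJ₀
  have hIJ : leI E J₀ := fun B s hb => Or.inl hb
  have hpre : leI (TP P.recFrag J₀) J₀ := by
    intro B s hb
    rcases hb with hb | ⟨r, hrm, σ, t₀, hbody, hent⟩
    · exact hb
    · obtain ⟨hr, hne⟩ := hrm
      have hok : HeadOK (r.head.subst σ) := headOK_map _ r.head_ok
      have hB : B.pred ∈ gpreds (r.head.subst σ) := gEntails_pred hok hent
      have hB' : B.pred ∈ r.headPreds := by rwa [gpreds_subst] at hB
      have hss := gpreds_subsingleton hok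
      rw [gpreds_subst] at hss
      push_neg at hne
      obtain ⟨Q, hQ, hQrec⟩ := hne
      have : Q = B.pred := hss hQ hB'
      exact Or.inr (this ▸ hQrec)
  rcases hc J₀ hIJ hpre with h | h
  · exact h
  · exact absurd h hnr

/-- once all non-recursive predicates are fully materialised
(`can(Π_nr,D) ⊆ 𝔍_E ⊆ can(Π,D)`), the non-recursive rules can be discarded:
`can(Π_rec, E) = can(Π, E) = can(Π, D)`. -/
theorem discard_nonrecursive_fragment (P : Program) (D E : Dataset)
    (h1 : leI D.interp E.interp) (h2 : leI E.interp (canon P D.interp))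
    (h3 : leI (canon P.nrFrag D.interp) E.interp) :
    canon P.recFrag E.interp = canon P E.interp ∧ canon P E.interp = canon P D.interp := by
  -- `K = can(Π_rec, E)` is a prefixed point of `T_Π`.
  set K : Interp := canon P.recFrag E.interp with hK
  have hEK : leI E.interp K := le_canon _ _
  have hKpre : leI (TP P K) K := by
    intro A t h
    rcases h with h | ⟨r, hr, σ, t₀, hbody, hent⟩
    · exact h
    · by_cases hnr : ∀ Q ∈ r.headPreds, ¬ Recursive P Q
      · -- nonrecursive rule
        have hok : HeadOK (r.head.subst σ) := headOK_map _ r.head_ok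
        have hA : A.pred ∈ gpreds (r.head.subst σ) := gEntails_pred hok hent
        have hA' : A.pred ∈ r.headPreds := by rwa [gpreds_subst] at hA
        have hAnr : ¬ Recursive P A.pred := hnr A.pred hA'
        -- the body is satisfied already in E
        have hbodyE : ∀ M ∈ r.body, sat E.interp t₀ (M.subst σ) := by
          intro M hM
          refine sat_congr_mp _ (fun C u hC hCu => ?_) t₀ (hbody M hM)
          rw [gpreds_subst] at hC
          have hCb : C.pred ∈ r.bodyPreds := Set.mem_biUnion hM hC
          exact canon_recFrag_nonrec P E.interp hCu (body_nonrec hr hnr hCb hA')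
        -- hence in can(Π, D)
        have hbodyD : ∀ M ∈ r.body, sat (canon P D.interp) t₀ (M.subst σ) :=
          fun M hM => sat_mono h2 _ _ (hbodyE M hM)
        have hcanD : canon P D.interp A t :=
          canon_prefixed P D.interp A t (Or.inr ⟨r, hr, σ, t₀, hbodyD, hent⟩)
        have hnrD : canon P.nrFrag D.interp A t := canon_nonrec_proj P D.interp hcanD hAnr
        exact hEK A t (h3 A t hnrD)
      · -- recursive rule
        exact canon_prefixed P.recFrag E.interp A t
          (Or.inr ⟨r, ⟨hr, hnr⟩, σ, t₀, hbody, hent⟩)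
  have e1 : canon P.recFrag E.interp = canon P E.interp := by
    funext A t
    apply propext
    constructor
    · exact fun h => canon_rules_mono (P := P) (P' := P.recFrag) (fun _ hr => hr.1) E.interp A t h
    · exact fun h => canon_le P hEK hKpre A t h
  have e2 : canon P E.interp = canon P D.interp := by
    funext A t
    apply propext
    constructor
    · intro h J hDJ hJpre
      exact h J (fun B s hb => canon_le P hDJ hJpre B s (h2 B s hb)) hJpre
    · exact fun h => canon_mono P h1 A t h
  exact ⟨e1, e2⟩

end DatalogMTL
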